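/- arXiv:1502.03791 — 3 statements merged into one kernel-verified Lean document; each statement's English description precedes it below -/
import Mathlib

section
/- Suppose X is a Banach space, X₁ and Z are closed subspaces of X, 0 < ε < 1, and P is a bounded linear projection from X onto X₁ with ‖Pz‖ ≤ ε‖z‖ for all z ∈ Z. Then there is a bounded linear projection Q from X₁ + Z onto X₁ such that Qz = 0 for all z ∈ Z (explicitly, Q = I − R⁻¹(I − P) where R = (I − P)|_Z, which is an isomorphism of Z onto W = (I − P)Z). -/
/-- An isomorphic embedding of Banach spaces: a bounded linear map which is
bounded below (hence an isomorphism onto its range). -/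
def IsIsomorphicEmbedding {Y X : Type*} [NormedAddCommGroup Y] [NormedSpace ℝ Y]
    [NormedAddCommGroup X] [NormedSpace ℝ X] (T : Y →L[ℝ] X) : Prop :=
  ∃ c : ℝ, 0 < c ∧ ∀ y : Y, c * ‖y‖ ≤ ‖T y‖

/-- `Y` embeds isomorphically into `X`. -/
def EmbedsInto (Y X : Type*) [NormedAddCommGroup Y] [NormedSpace ℝ Y]
    [NormedAddCommGroup X] [NormedSpace ℝ X] : Prop :=
  ∃ T : Y →L[ℝ] X, IsIsomorphicEmbedding T

/-- `X` is `K`-elastic: whenever a Banach space `Y` embeds isomorphically into `X`,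
there is an embedding `T : Y → X` with `‖y‖ ≤ ‖T y‖ ≤ K * ‖y‖` for all `y`. -/
def IsKElastic (X : Type*) [NormedAddCommGroup X] [NormedSpace ℝ X] (K : ℝ) : Prop :=
  ∀ (Y : Type) [NormedAddCommGroup Y] [NormedSpace ℝ Y] [CompleteSpace Y],
    EmbedsInto Y X → ∃ T : Y →L[ℝ] X, ∀ y : Y, ‖y‖ ≤ ‖T y‖ ∧ ‖T y‖ ≤ K * ‖y‖

/-!
Since `P` fixes `X₁` and nearly kills `Z`, `I - P` kills `X₁` and is bounded below on `Z`:
for `x ∈ X₁`, `z ∈ Z` we get `(1 - ε) ‖z‖ ≤ ‖(I - P)(x + z)‖ ≤ (1 + ‖P‖) ‖x + z‖`.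
Hence `X₁ ∩ Z = 0` and `‖x‖ ≤ (1 + (1 + ‖P‖) / (1 - ε)) ‖x + z‖`, so the algebraic projection
`x + z ↦ x` of `X₁ + Z` onto `X₁` is bounded.
-/

namespace Submodule

section Algebraic

variable {R E : Type*} [Ring R] [AddCommGroup E] [Module R E] {p q : Submodule R E}

/-- The projection `x + y ↦ x` of `p ⊔ q` onto `p` along `q`. -/
noncomputable def linearProjOfDisjoint (h : Disjoint p q) : ↥(p ⊔ q) →ₗ[R] E :=
  ((LinearPMap.mk p p.subtype).sup (.mk q 0)
    (LinearPMap.sup_h_of_disjoint (.mk p p.subtype) (.mk q 0) h)).toFun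

theorem linearProjOfDisjoint_apply_add (h : Disjoint p q) {x y : E} (hx : x ∈ p) (hy : y ∈ q)
    (u : ↥(p ⊔ q)) (hu : x + y = u) : linearProjOfDisjoint h u = x :=
  (LinearPMap.sup_apply (LinearPMap.sup_h_of_disjoint (.mk p p.subtype) (.mk q 0) h)
    ⟨x, hx⟩ ⟨y, hy⟩ u hu).trans (add_zero x)

theorem linearProjOfDisjoint_apply_of_mem_left (h : Disjoint p q) (u : ↥(p ⊔ q))
    (hu : (u : E) ∈ p) : linearProjOfDisjoint h u = u :=
  linearProjOfDisjoint_apply_add h hu q.zero_mem u (add_zero _)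

theorem linearProjOfDisjoint_apply_of_mem_right (h : Disjoint p q) (u : ↥(p ⊔ q))
    (hu : (u : E) ∈ q) : linearProjOfDisjoint h u = 0 :=
  linearProjOfDisjoint_apply_add h p.zero_mem hu u (zero_add _)

theorem exists_linearProjOfDisjoint_apply_eq (h : Disjoint p q) (u : ↥(p ⊔ q)) :
    ∃ x ∈ p, ∃ y ∈ q, x + y = u ∧ linearProjOfDisjoint h u = x := by
  obtain ⟨x, hx, y, hy, hu⟩ := mem_sup.1 u.2
  exact ⟨x, hx, y, hy, hu, linearProjOfDisjoint_apply_add h hx hy u hu⟩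

theorem linearProjOfDisjoint_apply_mem (h : Disjoint p q) (u : ↥(p ⊔ q)) :
    linearProjOfDisjoint h u ∈ p := by
  obtain ⟨x, hx, -, -, -, hu⟩ := exists_linearProjOfDisjoint_apply_eq h u
  exact hu ▸ hx

end Algebraic

section Normed

variable {𝕜 E : Type*} [NontriviallyNormedField 𝕜] [SeminormedAddCommGroup E] [NormedSpace 𝕜 E]
  {p q : Submodule 𝕜 E}

theorem norm_linearProjOfDisjoint_apply_le (h : Disjoint p q) {C : ℝ}
    (hC : ∀ x ∈ p, ∀ y ∈ q, ‖x‖ ≤ C * ‖x + y‖) (u : ↥(p ⊔ q)) :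
    ‖linearProjOfDisjoint h u‖ ≤ C * ‖u‖ := by
  obtain ⟨x, hx, y, hy, hu, hQu⟩ := exists_linearProjOfDisjoint_apply_eq h u
  rw [hQu, coe_norm, ← hu]
  exact hC x hx y hy

noncomputable def projOfDisjoint (h : Disjoint p q) {C : ℝ}
    (hC : ∀ x ∈ p, ∀ y ∈ q, ‖x‖ ≤ C * ‖x + y‖) : ↥(p ⊔ q) →L[𝕜] E :=
  (linearProjOfDisjoint h).mkContinuous C (norm_linearProjOfDisjoint_apply_le h hC)

end Normed

end Submodule

theorem disjoint_of_almost_annihilated {R E : Type*} [Semiring R] [NormedAddCommGroup E]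
    [Module R E] {P : E → E} {X₁ Z : Submodule R E} {ε : ℝ} (hε : ε < 1)
    (hPfix : ∀ x ∈ X₁, P x = x) (hPZ : ∀ z ∈ Z, ‖P z‖ ≤ ε * ‖z‖) : Disjoint X₁ Z := by
  refine Submodule.disjoint_def.2 fun x hx hxZ => norm_le_zero_iff.1 ?_
  have := hPfix x hx ▸ hPZ x hxZ
  nlinarith [norm_nonneg x]

theorem norm_le_mul_norm_add_of_almost_annihilated {𝕜 E : Type*} [NontriviallyNormedField 𝕜]
    [SeminormedAddCommGroup E] [NormedSpace 𝕜 E] {P : E →L[𝕜] E} {X₁ Z : Submodule 𝕜 E} {ε : ℝ}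
    (hε : ε < 1)
    (hPfix : ∀ x ∈ X₁, P x = x) (hPZ : ∀ z ∈ Z, ‖P z‖ ≤ ε * ‖z‖)
    {x z : E} (hx : x ∈ X₁) (hz : z ∈ Z) :
    ‖x‖ ≤ (1 + (1 + ‖P‖) / (1 - ε)) * ‖x + z‖ := by
  have hIP : (x + z) - P (x + z) = z - P z := by
    rw [map_add, hPfix x hx]; abel
  have hz_lower : (1 - ε) * ‖z‖ ≤ ‖z - P z‖ := by
    linarith [norm_sub_norm_le z (P z), hPZ z hz]
  have hz_upper : ‖z - P z‖ ≤ (1 + ‖P‖) * ‖x + z‖ := by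
    rw [← hIP]
    linarith [norm_sub_le (x + z) (P (x + z)), P.le_opNorm (x + z)]
  have hz_le : ‖z‖ ≤ (1 + ‖P‖) / (1 - ε) * ‖x + z‖ := by
    rw [div_mul_eq_mul_div, le_div_iff₀ (sub_pos.2 hε), mul_comm]
    exact hz_lower.trans hz_upper
  calc ‖x‖ = ‖(x + z) - z‖ := by rw [add_sub_cancel_right]
    _ ≤ ‖x + z‖ + ‖z‖ := norm_sub_le _ _
    _ ≤ (1 + (1 + ‖P‖) / (1 - ε)) * ‖x + z‖ := by linarith

theorem projection_with_kernel_containing_Z_general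
    (X : Type) [NormedAddCommGroup X] [NormedSpace ℝ X]
    (X₁ Z : Submodule ℝ X)
    (ε : ℝ) (hε1 : ε < 1)
    (P : X →L[ℝ] X) (hPfix : ∀ x ∈ X₁, P x = x)
    (hPZ : ∀ z ∈ Z, ‖P z‖ ≤ ε * ‖z‖) :
    ∃ Q : ↥(X₁ ⊔ Z) →L[ℝ] X,
      (∀ u : ↥(X₁ ⊔ Z), (u : X) ∈ X₁ → Q u = (u : X)) ∧
      (∀ u : ↥(X₁ ⊔ Z), (u : X) ∈ Z → Q u = 0) ∧
      (∀ u : ↥(X₁ ⊔ Z), Q u ∈ X₁) := by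
  have hdisj : Disjoint X₁ Z := disjoint_of_almost_annihilated hε1 hPfix hPZ
  have hbound : ∀ x ∈ X₁, ∀ z ∈ Z, ‖x‖ ≤ (1 + (1 + ‖P‖) / (1 - ε)) * ‖x + z‖ :=
    fun x hx z hz => norm_le_mul_norm_add_of_almost_annihilated hε1 hPfix hPZ hx hz
  exact ⟨Submodule.projOfDisjoint hdisj hbound,
    Submodule.linearProjOfDisjoint_apply_of_mem_left hdisj,
    Submodule.linearProjOfDisjoint_apply_of_mem_right hdisj,
    Submodule.linearProjOfDisjoint_apply_mem hdisj⟩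

/-- If `X₁`, `Z` are closed subspaces of a Banach space `X`, `0 < ε < 1`, and `P` is a
projection of `X` onto `X₁` with `‖P z‖ ≤ ε ‖z‖` on `Z`, then there is a (bounded linear)
projection `Q` from `X₁ + Z` onto `X₁` vanishing on `Z`. -/
theorem projection_with_kernel_containing_Z
    (X : Type) [NormedAddCommGroup X] [NormedSpace ℝ X] [CompleteSpace X]
    (X₁ Z : Submodule ℝ X) (hX₁ : IsClosed (X₁ : Set X)) (hZ : IsClosed (Z : Set X))
    (ε : ℝ) (hε0 : 0 < ε) (hε1 : ε < 1)
    (P : X →L[ℝ] X) (hPmem : ∀ x : X, P x ∈ X₁) (hPfix : ∀ x ∈ X₁, P x = x)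
    (hPZ : ∀ z ∈ Z, ‖P z‖ ≤ ε * ‖z‖) :
    ∃ Q : ↥(X₁ ⊔ Z) →L[ℝ] X,
      (∀ u : ↥(X₁ ⊔ Z), (u : X) ∈ X₁ → Q u = (u : X)) ∧
      (∀ u : ↥(X₁ ⊔ Z), (u : X) ∈ Z → Q u = 0) ∧
      (∀ u : ↥(X₁ ⊔ Z), Q u ∈ X₁) :=
  projection_with_kernel_containing_Z_general X X₁ Z ε hε1 P hPfix hPZ
end

section
/- Let Z be a Banach space with a normalized 1-unconditional Schauder basis (z_n), let X and Y_n, n ∈ ℕ, be separable Banach spaces, and let C, D > 0. Suppose 𝒯 is a (∑ Y_n)_Z-tree in X with constants C, D whose order is ω₁. Then X contains a subspace which is D-isomorphic to (∑ Y_n)_Z, i.e., there is an isomorphism U of (∑ Y_n)_Z onto a subspace of X with ‖U‖·‖U⁻¹‖ ≤ D. -/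
/-- A normalized `1`-unconditional (Schauder) basis `(z n)` of a Banach space `Z`:
every vector has a unique (unconditionally convergent) expansion `∑ a n • z n`, each
`z n` has norm one, and the basis is `1`-unconditional in the sense that making the
coefficients smaller in absolute value does not increase the norm of the sum. -/
structure NormalizedUncondBasis (Z : Type*) [NormedAddCommGroup Z] [NormedSpace ℝ Z] where
  z : ℕ → Z
  norm_one : ∀ n, ‖z n‖ = 1
  repr : ∀ x : Z, ∃! a : ℕ → ℝ, HasSum (fun n => a n • z n) x
  uncond : ∀ a b : ℕ → ℝ, (∀ n, |a n| ≤ |b n|) → Summable (fun n => b n • z n) →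
    Summable (fun n => a n • z n) ∧ ‖∑' n, a n • z n‖ ≤ ‖∑' n, b n • z n‖

/-- The `Z`-sum `(∑ Y n)_Z` of the spaces `Y n` with respect to the `1`-unconditional
basis `(z n)` of `Z`: all sequences `(y n)`, `y n ∈ Y n`, such that `∑ ‖y n‖ • z n`
converges in `Z`; it is normed by `‖(y n)‖ = ‖∑ ‖y n‖ • z n‖` (see `zsumNorm`). -/
noncomputable def zsum {Z : Type*} [NormedAddCommGroup Z] [NormedSpace ℝ Z]
    (B : NormalizedUncondBasis Z)
    (Y : ℕ → Type*) [∀ n, NormedAddCommGroup (Y n)] [∀ n, NormedSpace ℝ (Y n)] :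
    Submodule ℝ (∀ n, Y n) where
  carrier := {y | Summable (fun n => ‖y n‖ • B.z n)}
  zero_mem' := by
    simp only [Set.mem_setOf_eq, Pi.zero_apply, norm_zero, zero_smul]
    exact summable_zero
  add_mem' := by
    intro a b ha hb
    have hs : Summable (fun n => (‖a n‖ + ‖b n‖) • B.z n) := by
      simpa [add_smul] using ha.add hb
    refine (B.uncond _ _ (fun n => ?_) hs).1
    rw [abs_of_nonneg (norm_nonneg _), abs_of_nonneg (by positivity)]
    exact norm_add_le _ _
  smul_mem' := by
    intro c y hy
    have h : (fun n => ‖(c • y) n‖ • B.z n) = fun n => |c| • (‖y n‖ • B.z n) := by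
      funext n
      simp [norm_smul, mul_smul, Real.norm_eq_abs]
    rw [Set.mem_setOf_eq, h]
    exact hy.const_smul |c|

/-- The norm of an element of the `Z`-sum `(∑ Y n)_Z`. -/
noncomputable def zsumNorm {Z : Type*} [NormedAddCommGroup Z] [NormedSpace ℝ Z]
    (B : NormalizedUncondBasis Z)
    {Y : ℕ → Type*} [∀ n, NormedAddCommGroup (Y n)] [∀ n, NormedSpace ℝ (Y n)]
    (y : ↥(zsum B Y)) : ℝ :=
  ‖∑' n, ‖(y : ∀ n, Y n) n‖ • B.z n‖

/-- A node of a `(∑ Y n)_Z`-tree in `X`: a finite tuple `((X₁,T₁),…,(X_k,T_k))` where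
`X_j` is a subspace of `X` and `T_j` is an isomorphism of `X_j` onto `Y_j`. -/
def TreeNode (X : Type*) [NormedAddCommGroup X] [NormedSpace ℝ X]
    (Y : ℕ → Type*) [∀ n, NormedAddCommGroup (Y n)] [∀ n, NormedSpace ℝ (Y n)] :=
  Σ k : ℕ, ∀ j : Fin k, Σ V : Submodule ℝ X, (↥V ≃L[ℝ] Y j)

/-- The extension partial order on nodes: `a ≤ b` iff `b` extends the tuple `a`. -/
def NodeLE {X : Type*} [NormedAddCommGroup X] [NormedSpace ℝ X]
    {Y : ℕ → Type*} [∀ n, NormedAddCommGroup (Y n)] [∀ n, NormedSpace ℝ (Y n)]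
    (a b : TreeNode X Y) : Prop :=
  ∃ h : a.1 ≤ b.1, ∀ j : Fin a.1, b.2 (Fin.castLE h j) = a.2 j

/-- The derivation of a tree: delete all nodes with no proper extension in the tree. -/
def derivOne {X : Type*} [NormedAddCommGroup X] [NormedSpace ℝ X]
    {Y : ℕ → Type*} [∀ n, NormedAddCommGroup (Y n)] [∀ n, NormedSpace ℝ (Y n)]
    (T : Set (TreeNode X Y)) : Set (TreeNode X Y) :=
  {a ∈ T | ∃ b ∈ T, NodeLE a b ∧ a ≠ b}

/-- Transfinite iteration of the derivation `T ↦ T⁽¹⁾`, with intersections at limits. -/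
noncomputable def derivIter {X : Type*} [NormedAddCommGroup X] [NormedSpace ℝ X]
    {Y : ℕ → Type*} [∀ n, NormedAddCommGroup (Y n)] [∀ n, NormedSpace ℝ (Y n)]
    (T : Set (TreeNode X Y)) (o : Ordinal) : Set (TreeNode X Y) :=
  Ordinal.limitRecOn o T (fun _ S => derivOne S)
    (fun o _ ih => ⋂ p : {p : Ordinal // p < o}, ih p.1 p.2)

/-- The conditions on the nodes of a `(∑ Y n)_Z`-tree in `X` with constants `C`, `D`:
each `X_j` is closed, `‖T_j‖ ≤ C`, `‖T_j⁻¹‖ ≤ 1`, and for all `x_j ∈ X_j`,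
`‖∑ x_j‖ ≤ ‖(T_j x_j)_j‖_Z ≤ D ‖∑ x_j‖`. -/
def GoodNode {Z : Type*} [NormedAddCommGroup Z] [NormedSpace ℝ Z]
    (B : NormalizedUncondBasis Z) {X : Type*} [NormedAddCommGroup X] [NormedSpace ℝ X]
    {Y : ℕ → Type*} [∀ n, NormedAddCommGroup (Y n)] [∀ n, NormedSpace ℝ (Y n)]
    (C D : ℝ) (a : TreeNode X Y) : Prop :=
  (∀ j : Fin a.1, IsClosed ((a.2 j).1 : Set X) ∧
      ‖((a.2 j).2 : ↥(a.2 j).1 →L[ℝ] Y j)‖ ≤ C ∧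
      ‖((a.2 j).2.symm : Y j →L[ℝ] ↥(a.2 j).1)‖ ≤ 1) ∧
  ∀ x : ∀ j : Fin a.1, ↥(a.2 j).1,
    ‖∑ j, ((x j : X))‖ ≤ ‖∑ j, ‖(a.2 j).2 (x j)‖ • B.z j‖ ∧
    ‖∑ j, ‖(a.2 j).2 (x j)‖ • B.z j‖ ≤ D * ‖∑ j, ((x j : X))‖

/-!
A tree in `X` may be uncountable, so having nonempty derivatives at all countable stages does
not directly give an infinite branch. Separability repairs this: coding a node by finitely many
labels that locate, to within `2⁻ˡ`, the images under its embeddings of the first points of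
dense sequences in the `Yⱼ` maps the tree monotonically onto a countable tree of codes whose
countable derivatives are still nonempty. The derivatives of a countable tree stabilise before
`ω₁`, and the stable part is a nonempty tree without maximal nodes, hence has an infinite branch.
Nodes lying over this branch have embeddings converging on the dense sequences, hence (being
contractions) everywhere; the limits inherit the finite tree estimates, and summing them embeds
`(∑ Yₙ)_Z` into `X` with distortion `D`.
-/

open Filter Topology
open scoped Ordinal

universe u

section Derivative

variable {γ δ : Type*}

def derivSet (r : γ → γ → Prop) (A : Set γ) : Set γ :=
  {a ∈ A | ∃ b ∈ A, r a b ∧ a ≠ b}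

noncomputable def derivSetIter (r : γ → γ → Prop) (A : Set γ) (o : Ordinal.{u}) : Set γ :=
  Ordinal.limitRecOn o A (fun _ S => derivSet r S)
    (fun o _ ih => ⋂ p : {p : Ordinal // p < o}, ih p.1 p.2)

variable (r : γ → γ → Prop) (A : Set γ)

lemma derivSet_subset : derivSet r A ⊆ A := fun _ ha => ha.1

@[simp] lemma derivSetIter_zero : derivSetIter.{u} r A 0 = A :=
  Ordinal.limitRecOn_zero ..

@[simp] lemma derivSetIter_add_one (o : Ordinal.{u}) :
    derivSetIter r A (o + 1) = derivSet r (derivSetIter r A o) :=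
  Ordinal.limitRecOn_add_one ..

lemma derivSetIter_of_isSuccLimit {o : Ordinal.{u}} (ho : Order.IsSuccLimit o) :
    derivSetIter r A o = ⋂ p : {p : Ordinal // p < o}, derivSetIter r A p.1 :=
  Ordinal.limitRecOn_limit _ _ _ _ ho

lemma derivSetIter_antitone : Antitone (derivSetIter.{u} r A) := by
  suffices h : ∀ o p : Ordinal.{u}, p ≤ o → derivSetIter r A o ⊆ derivSetIter r A p from
    fun p o hpo => h o p hpo
  intro o
  induction o using Ordinal.limitRecOn with
  | zero => intro p hp; rw [nonpos_iff_eq_zero.1 hp]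
  | add_one o ih =>
    intro p hp
    rcases hp.eq_or_lt with rfl | hp
    · rfl
    rw [derivSetIter_add_one]
    exact (derivSet_subset r _).trans (ih p (Order.lt_add_one_iff.1 hp))
  | limit o ho _ =>
    intro p hp
    rcases hp.eq_or_lt with rfl | hp
    · rfl
    rw [derivSetIter_of_isSuccLimit r A ho]
    exact Set.iInter_subset (fun p : {p : Ordinal.{u} // p < o} => derivSetIter r A p.1) ⟨p, hp⟩

lemma image_derivSetIter_subset (r' : δ → δ → Prop) (ψ : γ → δ)
    (hψ : ∀ a b, r a b → a ≠ b → r' (ψ a) (ψ b) ∧ ψ a ≠ ψ b) (o : Ordinal.{u}) :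
    ψ '' derivSetIter r A o ⊆ derivSetIter r' (ψ '' A) o := by
  induction o using Ordinal.limitRecOn with
  | zero => simp
  | add_one o ih =>
    rw [derivSetIter_add_one, derivSetIter_add_one]
    rintro _ ⟨a, ⟨ha, b, hb, hab, hne⟩, rfl⟩
    exact ⟨ih ⟨a, ha, rfl⟩, ψ b, ih ⟨b, hb, rfl⟩, hψ a b hab hne⟩
  | limit o ho ih =>
    rw [derivSetIter_of_isSuccLimit r A ho, derivSetIter_of_isSuccLimit r' _ ho]
    rintro _ ⟨a, ha, rfl⟩
    exact Set.mem_iInter.2 fun p => ih p.1 p.2 ⟨a, Set.mem_iInter.1 ha p, rfl⟩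

lemma exists_derivSet_derivSetIter_eq [Countable γ] :
    ∃ α : Ordinal.{u}, α < ω₁ ∧ derivSet r (derivSetIter r A α) = derivSetIter r A α := by
  classical
  -- an ordinal `< ω₁` at which `c` has been removed, if there is one
  let f : γ → Ordinal.{u} := fun c =>
    if h : ∃ o < ω₁, c ∉ derivSetIter r A o then h.choose else 0
  have hf : ∀ c, f c < ω₁ := fun c => by
    simp only [f]
    split_ifs with h
    exacts [h.choose_spec.1, Ordinal.omega_pos 1]
  refine ⟨⨆ c, f c, Ordinal.iSup_lt_omega_one hf,
    (derivSet_subset r _).antisymm fun c hc => ?_⟩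
  by_contra hc'
  have h : ∃ o < ω₁, c ∉ derivSetIter r A o :=
    ⟨_, (Cardinal.isSuccLimit_omega 1).add_one_lt (Ordinal.iSup_lt_omega_one hf),
      by rwa [derivSetIter_add_one]⟩
  have hle : h.choose ≤ ⨆ c, f c := by
    simpa only [f, dif_pos h] using Ordinal.le_iSup f c
  exact h.choose_spec.2 (derivSetIter_antitone r A hle hc)

lemma exists_chain_of_derivSetIter_nonempty [Countable γ]
    (h : ∀ o : Ordinal.{u}, o < ω₁ → (derivSetIter r A o).Nonempty) :
    ∃ c : ℕ → γ, (∀ m, c m ∈ A) ∧ ∀ m, r (c m) (c (m + 1)) ∧ c m ≠ c (m + 1) := by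
  obtain ⟨α, hα, hstab⟩ := exists_derivSet_derivSetIter_eq.{u} r A
  set R := derivSetIter r A α
  have hnext : ∀ c : R, ∃ d : R, r c d ∧ (c : γ) ≠ d := fun ⟨c, hc⟩ => by
    obtain ⟨-, d, hd, hcd⟩ := hstab.symm ▸ hc
    exact ⟨⟨d, hd⟩, hcd⟩
  choose next hnext using hnext
  obtain ⟨c₀, hc₀⟩ := h α hα
  refine ⟨fun m => (next^[m] ⟨c₀, hc₀⟩ : γ), fun m => ?_, fun m => ?_⟩
  · simpa using derivSetIter_antitone r A (zero_le (a := α)) (next^[m] ⟨c₀, hc₀⟩).2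
  · simpa only [Function.iterate_succ_apply'] using hnext _

end Derivative

def FinTuple (F : ℕ → Type*) : Type _ := Σ k, ∀ j : Fin k, F j

namespace FinTuple

variable {F : ℕ → Type*}

lemma ext_of_fst_eq {a b : FinTuple F}
    (hle : ∃ h : a.1 ≤ b.1, ∀ j : Fin a.1, b.2 (Fin.castLE h j) = a.2 j) (hlen : a.1 = b.1) :
    a = b := by
  obtain ⟨k, f⟩ := a
  obtain ⟨k', g⟩ := b
  obtain rfl : k = k' := hlen
  obtain ⟨_, he⟩ := hle
  exact congrArg _ (funext fun j => (he j).symm)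

instance : PartialOrder (FinTuple F) where
  le a b := ∃ h : a.1 ≤ b.1, ∀ j : Fin a.1, b.2 (Fin.castLE h j) = a.2 j
  le_refl _ := ⟨le_rfl, fun _ => rfl⟩
  le_trans _ _ _ := fun ⟨hab, eab⟩ ⟨hbc, ebc⟩ =>
    ⟨hab.trans hbc, fun j => (ebc (Fin.castLE hab j)).trans (eab j)⟩
  le_antisymm _ _ hab hba := ext_of_fst_eq hab (hab.1.antisymm hba.1)

lemma fst_strictMono : StrictMono (fun a : FinTuple F => a.1) := fun _ _ hab =>
  hab.le.1.lt_of_ne fun h => hab.ne (ext_of_fst_eq hab.le h)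

instance [∀ j, Countable (F j)] : Countable (FinTuple F) := by
  unfold FinTuple; infer_instance

end FinTuple

section Nodes

variable {Z : Type*} [NormedAddCommGroup Z] [NormedSpace ℝ Z] {B : NormalizedUncondBasis Z}
variable {X : Type*} [NormedAddCommGroup X] [NormedSpace ℝ X]
variable {Y : ℕ → Type*} [∀ n, NormedAddCommGroup (Y n)] [∀ n, NormedSpace ℝ (Y n)]

lemma derivIter_eq_derivSetIter (T : Set (TreeNode X Y)) (o : Ordinal.{u}) :
    derivIter T o = derivSetIter NodeLE T o :=
  rfl

lemma NodeLE.fst_lt {a b : TreeNode X Y} (hab : NodeLE a b) (hne : a ≠ b) : a.1 < b.1 :=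
  FinTuple.fst_strictMono (F := fun j => Σ V : Submodule ℝ X, ↥V ≃L[ℝ] Y j)
    (lt_of_le_of_ne hab hne)

/-- The map `T_j⁻¹ : Y j → X_j ⊆ X` of the `j`-th entry of a node (`0` beyond its length). -/
noncomputable def nodeOp (a : TreeNode X Y) (j : ℕ) : Y j →ₗ[ℝ] X :=
  if h : j < a.1 then (a.2 ⟨j, h⟩).1.subtype ∘ₗ ((a.2 ⟨j, h⟩).2.symm : Y j →ₗ[ℝ] _) else 0

lemma nodeOp_apply (a : TreeNode X Y) {j : ℕ} (h : j < a.1) (y : Y j) :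
    nodeOp a j y = ((a.2 ⟨j, h⟩).2.symm y : X) := by
  rw [nodeOp, dif_pos h]
  rfl

lemma nodeOp_eq_of_nodeLE {a b : TreeNode X Y} (hab : NodeLE a b) {j : ℕ} (hj : j < a.1) :
    nodeOp b j = nodeOp a j := by
  obtain ⟨hk, he⟩ := hab
  rw [nodeOp, nodeOp, dif_pos hj, dif_pos (hj.trans_le hk), ← he ⟨j, hj⟩]
  rfl

lemma GoodNode.norm_nodeOp_apply_le {C D : ℝ} {a : TreeNode X Y} (ha : GoodNode B C D a)
    (j : ℕ) (y : Y j) : ‖nodeOp a j y‖ ≤ ‖y‖ := by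
  by_cases h : j < a.1
  · have hsymm : ‖((a.2 ⟨j, h⟩).2.symm : Y j →L[ℝ] (a.2 ⟨j, h⟩).1)‖ ≤ 1 :=
      (ha.1 ⟨j, h⟩).2.2
    rw [nodeOp_apply a h]
    exact ContinuousLinearMap.le_of_opNorm_le _ hsymm y |>.trans_eq (one_mul _)
  · simp [nodeOp, dif_neg h]

lemma GoodNode.lipschitzWith_nodeOp {C D : ℝ} {a : TreeNode X Y} (ha : GoodNode B C D a)
    (j : ℕ) : LipschitzWith 1 (nodeOp a j) := by
  simpa using AddMonoidHomClass.lipschitz_of_bound (nodeOp a j) 1 fun y => by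
    simpa using ha.norm_nodeOp_apply_le j y

end Nodes

section ZsumBounds

variable {Z : Type*} [NormedAddCommGroup Z] [NormedSpace ℝ Z] (B : NormalizedUncondBasis Z)
variable {X : Type*} [NormedAddCommGroup X] [NormedSpace ℝ X]
variable {Y : ℕ → Type*} [∀ n, NormedAddCommGroup (Y n)] [∀ n, NormedSpace ℝ (Y n)]

/-- The two-sided estimate of a good node, restricted to the coordinates in `F`. -/
def ZsumBounds (D : ℝ) (S : ∀ j, Y j →ₗ[ℝ] X) (F : Finset ℕ) : Prop :=
  ∀ y : ∀ j, Y j, ‖∑ j ∈ F, S j (y j)‖ ≤ ‖∑ j ∈ F, ‖y j‖ • B.z j‖ ∧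
    ‖∑ j ∈ F, ‖y j‖ • B.z j‖ ≤ D * ‖∑ j ∈ F, S j (y j)‖

variable {B} {D : ℝ}

lemma ZsumBounds.mono {S : ∀ j, Y j →ₗ[ℝ] X} {F G : Finset ℕ} (h : ZsumBounds B D S F)
    (hGF : G ⊆ F) : ZsumBounds B D S G := by
  classical
  intro y
  have hX : ∑ j ∈ F, S j (if j ∈ G then y j else 0) = ∑ j ∈ G, S j (y j) := calc
    _ = ∑ j ∈ G, S j (if j ∈ G then y j else 0) :=
      (Finset.sum_subset hGF fun j _ hj => by simp [hj]).symm
    _ = _ := Finset.sum_congr rfl fun j hj => by simp [hj]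
  have hZ : ∑ j ∈ F, ‖if j ∈ G then y j else 0‖ • B.z j = ∑ j ∈ G, ‖y j‖ • B.z j := calc
    _ = ∑ j ∈ G, ‖if j ∈ G then y j else 0‖ • B.z j :=
      (Finset.sum_subset hGF fun j _ hj => by simp [hj]).symm
    _ = _ := Finset.sum_congr rfl fun j hj => by simp [hj]
  simpa only [hX, hZ] using h fun j => if j ∈ G then y j else 0

lemma ZsumBounds.of_tendsto {ι : Type*} {l : Filter ι} [l.NeBot] {S' : ι → ∀ j, Y j →ₗ[ℝ] X}
    {S : ∀ j, Y j →ₗ[ℝ] X} {F : Finset ℕ}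
    (hlim : ∀ j y, Tendsto (fun i => S' i j y) l (𝓝 (S j y)))
    (h : ∀ᶠ i in l, ZsumBounds B D (S' i) F) : ZsumBounds B D S F := fun y => by
  have hsum : Tendsto (fun i => ‖∑ j ∈ F, S' i j (y j)‖) l (𝓝 ‖∑ j ∈ F, S j (y j)‖) :=
    (tendsto_finsetSum F fun j _ => hlim j (y j)).norm
  exact ⟨le_of_tendsto hsum (h.mono fun i hi => (hi y).1),
    ge_of_tendsto (hsum.const_mul D) (h.mono fun i hi => (hi y).2)⟩

lemma GoodNode.zsumBounds_range {C : ℝ} {a : TreeNode X Y} (ha : GoodNode B C D a) :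
    ZsumBounds B D (nodeOp a) (Finset.range a.1) := fun y => by
  have hX : ∑ j : Fin a.1, (((a.2 j).2.symm (y j) : (a.2 j).1) : X) =
      ∑ j ∈ Finset.range a.1, nodeOp a j (y j) := by
    rw [← Fin.sum_univ_eq_sum_range (fun j => nodeOp a j (y j))]
    exact Finset.sum_congr rfl fun j _ => (nodeOp_apply a j.2 _).symm
  have hZ : ∑ j : Fin a.1, ‖(a.2 j).2 ((a.2 j).2.symm (y j))‖ • B.z j =
      ∑ j ∈ Finset.range a.1, ‖y j‖ • B.z j := by
    simp only [ContinuousLinearEquiv.apply_symm_apply]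
    exact Fin.sum_univ_eq_sum_range (fun j => ‖y j‖ • B.z j) a.1
  simpa only [hX, hZ] using ha.2 fun j => (a.2 j).2.symm (y j)

variable [CompleteSpace X] {S : ∀ j, Y j →ₗ[ℝ] X}

lemma summable_of_zsumBounds (hS : ∀ F, ZsumBounds B D S F) (y : zsum B Y) :
    Summable fun j => S j ((y : ∀ j, Y j) j) := by
  refine summable_iff_vanishing_norm.2 fun ε hε => ?_
  obtain ⟨s, hs⟩ := (show Summable _ from y.2).vanishing (Metric.ball_mem_nhds 0 hε)
  exact ⟨s, fun t ht => ((hS t _).1).trans_lt (mem_ball_zero_iff.1 (hs t ht))⟩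

lemma norm_tsum_le_zsumNorm (hS : ∀ F, ZsumBounds B D S F) (y : zsum B Y) :
    ‖∑' j, S j ((y : ∀ j, Y j) j)‖ ≤ zsumNorm B y :=
  le_of_tendsto_of_tendsto' (summable_of_zsumBounds hS y).hasSum.norm
    (show Summable _ from y.2).hasSum.norm fun F => (hS F _).1

lemma zsumNorm_le_mul_norm_tsum (hS : ∀ F, ZsumBounds B D S F) (y : zsum B Y) :
    zsumNorm B y ≤ D * ‖∑' j, S j ((y : ∀ j, Y j) j)‖ :=
  le_of_tendsto_of_tendsto' (show Summable _ from y.2).hasSum.norm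
    ((summable_of_zsumBounds hS y).hasSum.norm.const_mul D) fun F => (hS F _).2

theorem exists_zsum_embedding (hD : 0 < D) (hS : ∀ F, ZsumBounds B D S F) :
    ∃ (U : ↥(zsum B Y) →ₗ[ℝ] X) (c : ℝ), 0 < c ∧
      ∀ y : ↥(zsum B Y), c * zsumNorm B y ≤ ‖U y‖ ∧ ‖U y‖ ≤ D * c * zsumNorm B y := by
  let U : ↥(zsum B Y) →ₗ[ℝ] X :=
    { toFun y := ∑' j, S j ((y : ∀ j, Y j) j)
      map_add' y y' := by
        simp only [Submodule.coe_add, Pi.add_apply, map_add]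
        exact (summable_of_zsumBounds hS y).tsum_add (summable_of_zsumBounds hS y')
      map_smul' c y := by
        simp only [Submodule.coe_smul, Pi.smul_apply, map_smul, RingHom.id_apply]
        exact (summable_of_zsumBounds hS y).tsum_const_smul c }
  refine ⟨U, D⁻¹, inv_pos.2 hD, fun y => ?_⟩
  constructor
  · rw [inv_mul_le_iff₀ hD]
    exact zsumNorm_le_mul_norm_tsum hS y
  · rw [mul_inv_cancel₀ hD.ne', one_mul]
    exact norm_tsum_le_zsumNorm hS y

end ZsumBounds

section Approximation

lemma exists_nat_label_dist_lt (X : Type*) [PseudoMetricSpace X]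
    [TopologicalSpace.SeparableSpace X] [Nonempty X] {ε : ℝ} (hε : 0 < ε) :
    ∃ d : X → ℕ, ∀ x x', d x = d x' → dist x x' < ε := by
  obtain ⟨w, hw⟩ := TopologicalSpace.exists_dense_seq X
  choose d hd using fun x => hw.exists_dist_lt x (half_pos hε)
  refine ⟨d, fun x x' h => ?_⟩
  calc dist x x' ≤ dist x (w (d x)) + dist x' (w (d x')) := h ▸ dist_triangle_right _ _ _
    _ < ε / 2 + ε / 2 := add_lt_add (hd x) (hd x')
    _ = ε := add_halves ε

lemma cauchySeq_of_denseRange {α β ι : Type*} [PseudoMetricSpace α] [PseudoMetricSpace β]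
    {f : ℕ → α → β} {K : NNReal} (hf : ∀ m, LipschitzWith K (f m)) {q : ι → α}
    (hq : DenseRange q) (h : ∀ i, CauchySeq fun m => f m (q i)) (y : α) :
    CauchySeq fun m => f m y := by
  refine Metric.cauchySeq_iff.2 fun ε hε => ?_
  obtain ⟨i, hi⟩ := hq.exists_dist_lt y (by positivity : 0 < ε / (3 * (K + 1)))
  obtain ⟨N, hN⟩ := Metric.cauchySeq_iff.1 (h i) (ε / 3) (by positivity)
  have hK : ∀ m, dist (f m y) (f m (q i)) < ε / 3 := fun m => calc
    _ ≤ K * dist y (q i) := (hf m).dist_le_mul _ _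
    _ ≤ (K + 1) * dist y (q i) := by gcongr; linarith
    _ < (K + 1) * (ε / (3 * (K + 1))) := by gcongr
    _ = ε / 3 := by field_simp
  refine ⟨N, fun m hm n hn => ?_⟩
  calc dist (f m y) (f n y)
      ≤ dist (f m y) (f m (q i)) + dist (f m (q i)) (f n (q i)) + dist (f n (q i)) (f n y) :=
        dist_triangle4 _ _ _ _
    _ < ε / 3 + ε / 3 + ε / 3 := by
        gcongr
        exacts [hK m, hN m hm n hn, dist_comm (f n y) _ ▸ hK n]
    _ = ε := by ring

lemma exists_tendsto_linearMap_of_denseRange {R E F : Type*} [Semiring R]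
    [PseudoMetricSpace E] [AddCommMonoid E] [Module R E]
    [NormedAddCommGroup F] [Module R F] [ContinuousConstSMul R F] [CompleteSpace F]
    {f : ℕ → E →ₗ[R] F} {K : NNReal} (hf : ∀ m, LipschitzWith K (f m)) {q : ℕ → E}
    (hq : DenseRange q) (h : ∀ i, CauchySeq fun m => f m (q i)) :
    ∃ S : E →ₗ[R] F, ∀ y, Tendsto (fun m => f m y) atTop (𝓝 (S y)) := by
  choose g hg using fun y => cauchySeq_tendsto_of_complete (cauchySeq_of_denseRange hf hq h y)
  exact ⟨linearMapOfTendsto g f (tendsto_pi_nhds.2 hg), hg⟩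

end Approximation

section Codes

variable {X : Type*} [NormedAddCommGroup X] [NormedSpace ℝ X]
variable {Y : ℕ → Type*} [∀ n, NormedAddCommGroup (Y n)] [∀ n, NormedSpace ℝ (Y n)]

abbrev NodeCode : Type := FinTuple fun ℓ => Fin (ℓ + 1) → Fin (ℓ + 1) → ℕ

/-- Entry `ℓ` of the code of a node records the labels `d ℓ` of the images of the first `ℓ + 1`
points `q j i` of the first `ℓ + 1` spaces `Y j`. Unlike the nodes, the codes form a
countable set. -/
noncomputable def nodeCode (d : ℕ → X → ℕ) (q : ∀ n, ℕ → Y n) (a : TreeNode X Y) :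
    NodeCode :=
  ⟨a.1, fun ℓ j i => d ℓ (nodeOp a j (q j i))⟩

variable {d : ℕ → X → ℕ} {q : ∀ n, ℕ → Y n}

lemma nodeCode_le_of_nodeLE {a b : TreeNode X Y} (hab : NodeLE a b) :
    nodeCode d q a ≤ nodeCode d q b :=
  ⟨hab.1, fun ℓ => funext₂ fun j i => by
    simp only [nodeCode]
    rw [nodeOp_eq_of_nodeLE hab (Nat.lt_of_lt_of_le (j.2 : (j : ℕ) < ℓ + 1) ℓ.2)]
    rfl⟩

lemma label_eq_of_nodeCode_le {a b : TreeNode X Y} (hab : nodeCode d q a ≤ nodeCode d q b)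
    {ℓ j i : ℕ} (hℓ : ℓ < a.1) (hj : j ≤ ℓ) (hi : i ≤ ℓ) :
    d ℓ (nodeOp b j (q j i)) = d ℓ (nodeOp a j (q j i)) :=
  congrFun₂ (hab.2 ⟨ℓ, hℓ⟩) ⟨j, Nat.lt_succ_of_le hj⟩ ⟨i, Nat.lt_succ_of_le hi⟩

lemma le_fst_of_strictMono_nodeCode {a : ℕ → TreeNode X Y}
    (ha : StrictMono fun m => nodeCode d q (a m)) (m : ℕ) : m ≤ (a m).1 :=
  (FinTuple.fst_strictMono.comp ha).id_le m

theorem exists_strictMono_nodeCode (d : ℕ → X → ℕ) (q : ∀ n, ℕ → Y n)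
    (T : Set (TreeNode X Y)) (hT : ∀ o : Ordinal.{u}, o < ω₁ → (derivIter T o).Nonempty) :
    ∃ a : ℕ → TreeNode X Y, (∀ m, a m ∈ T) ∧ StrictMono fun m => nodeCode d q (a m) := by
  have hcode : ∀ o : Ordinal.{u}, o < ω₁ →
      (derivSetIter (· ≤ ·) (nodeCode d q '' T) o).Nonempty := fun o ho =>
    ((derivIter_eq_derivSetIter T o ▸ hT o ho).image _).mono <|
      image_derivSetIter_subset NodeLE T _ _ (fun _ _ hab hne => ⟨nodeCode_le_of_nodeLE hab,
        fun h => (hab.fst_lt hne).ne (congrArg (fun c : NodeCode => c.1) h)⟩) o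
  obtain ⟨c, hcT, hc⟩ := exists_chain_of_derivSetIter_nonempty _ _ hcode
  choose a haT hac using hcT
  refine ⟨a, haT, strictMono_nat_of_lt_succ fun m => ?_⟩
  simpa only [hac] using lt_of_le_of_ne (hc m).1 (hc m).2

lemma cauchySeq_nodeOp {ε : ℕ → ℝ} (hε : Tendsto ε atTop (𝓝 0))
    (hd : ∀ ℓ x x', d ℓ x = d ℓ x' → dist x x' < ε ℓ) {a : ℕ → TreeNode X Y}
    (ha : StrictMono fun m => nodeCode d q (a m)) (j i : ℕ) :
    CauchySeq fun m => nodeOp (a m) j (q j i) := by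
  refine Metric.cauchySeq_iff'.2 fun δ hδ => ?_
  obtain ⟨L, hL⟩ := eventually_atTop.1 (hε.eventually (gt_mem_nhds hδ))
  set N := max L (max j i)
  refine ⟨N + 1, fun n hn => (hd N _ _ ?_).trans (hL N (le_max_left _ _))⟩
  exact label_eq_of_nodeCode_le (ha.monotone hn) (le_fst_of_strictMono_nodeCode ha (N + 1))
    (by omega) (by omega)

end Codes

theorem zsum_tree_of_index_omega1_general
    (Z : Type) [NormedAddCommGroup Z] [NormedSpace ℝ Z]
    (B : NormalizedUncondBasis Z)
    (X : Type) [NormedAddCommGroup X] [NormedSpace ℝ X] [CompleteSpace X]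
    [TopologicalSpace.SeparableSpace X]
    (Y : ℕ → Type) [∀ n, NormedAddCommGroup (Y n)] [∀ n, NormedSpace ℝ (Y n)]
    [∀ n, TopologicalSpace.SeparableSpace (Y n)]
    (C D : ℝ) (hD : 0 < D)
    (T : Set (TreeNode X Y))
    (hT_good : ∀ a ∈ T, GoodNode B C D a)
    (hT_order : ∀ o : Ordinal, o.card ≤ Cardinal.aleph0 → (derivIter T o).Nonempty) :
    ∃ (U : ↥(zsum B Y) →ₗ[ℝ] X) (c : ℝ), 0 < c ∧
      ∀ y : ↥(zsum B Y),
        c * zsumNorm B y ≤ ‖U y‖ ∧ ‖U y‖ ≤ D * c * zsumNorm B y := by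
  choose q hq using fun n => TopologicalSpace.exists_dense_seq (Y n)
  choose d hd using fun ℓ : ℕ => exists_nat_label_dist_lt X (pow_pos one_half_pos ℓ)
  obtain ⟨a, haT, ha⟩ := exists_strictMono_nodeCode d q T fun o ho =>
    hT_order o (Cardinal.lt_aleph_one_iff.1 (Cardinal.lt_omega_iff_card_lt.1 ho))
  have hlim : ∀ j, ∃ S : Y j →ₗ[ℝ] X,
      ∀ y, Tendsto (fun m => nodeOp (a m) j y) atTop (𝓝 (S y)) :=
    fun j => exists_tendsto_linearMap_of_denseRange
      (fun m => (hT_good _ (haT m)).lipschitzWith_nodeOp j) (hq j)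
      (cauchySeq_nodeOp (tendsto_pow_atTop_nhds_zero_of_lt_one one_half_pos.le one_half_lt_one)
        hd ha j)
  choose S hS using hlim
  refine exists_zsum_embedding hD fun F => ZsumBounds.of_tendsto hS ?_
  obtain ⟨N, hN⟩ := F.exists_nat_subset_range
  filter_upwards [eventually_ge_atTop N] with m hm
  exact (hT_good _ (haT m)).zsumBounds_range.mono <|
    hN.trans (Finset.range_subset_range.2 (hm.trans (le_fst_of_strictMono_nodeCode ha m)))

/-- **Theorem (index `ω₁` gives an embedding of the sum).** If `Z` has a normalized
`1`-unconditional basis, `X` and the `Y n` are separable Banach spaces, and `𝒯` is a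
`(∑ Y n)_Z`-tree in `X` with constants `C`, `D` whose order is `ω₁` (i.e. all countable
transfinite derivatives are nonempty), then `X` contains a subspace `D`-isomorphic to
`(∑ Y n)_Z`: there is a linear embedding `U` with
`c ‖y‖_Z ≤ ‖U y‖ ≤ D c ‖y‖_Z` for some `c > 0`. -/
theorem zsum_tree_of_index_omega1
    (Z : Type) [NormedAddCommGroup Z] [NormedSpace ℝ Z] [CompleteSpace Z]
    (B : NormalizedUncondBasis Z)
    (X : Type) [NormedAddCommGroup X] [NormedSpace ℝ X] [CompleteSpace X]
    [TopologicalSpace.SeparableSpace X]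
    (Y : ℕ → Type) [∀ n, NormedAddCommGroup (Y n)] [∀ n, NormedSpace ℝ (Y n)]
    [∀ n, CompleteSpace (Y n)] [∀ n, TopologicalSpace.SeparableSpace (Y n)]
    (C D : ℝ) (hC : 0 < C) (hD : 0 < D)
    (T : Set (TreeNode X Y))
    (hT_initial : ∀ a ∈ T, ∀ (k : ℕ) (h : k ≤ a.1),
      (⟨k, fun j => a.2 (Fin.castLE h j)⟩ : TreeNode X Y) ∈ T)
    (hT_good : ∀ a ∈ T, GoodNode B C D a)
    (hT_order : ∀ o : Ordinal, o.card ≤ Cardinal.aleph0 → (derivIter T o).Nonempty) :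
    ∃ (U : ↥(zsum B Y) →ₗ[ℝ] X) (c : ℝ), 0 < c ∧
      ∀ y : ↥(zsum B Y),
        c * zsumNorm B y ≤ ‖U y‖ ∧ ‖U y‖ ≤ D * c * zsumNorm B y :=
  zsum_tree_of_index_omega1_general Z B X Y C D hD T hT_good hT_order
end

section
/- Let (x^α_n) be a standard basis of C₀(ω^α), let M ⊆ ℕ, and let φ : M → ℕ be injective. Then the two subsequences (x^α_i)_{i∈M} and (x^α_{φ(i)})_{i∈M} are 1-equivalent if and only if the map supp x^α_i ↦ supp x^α_{φ(i)} is an order isomorphism from {supp x^α_i : i ∈ M} onto {supp x^α_{φ(i)} : i ∈ M}, where both families of supports are partially ordered by set inclusion. -/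
set_option synthInstance.maxHeartbeats 1000000
set_option maxHeartbeats 1000000

noncomputable section

/-- The half-open ordinal interval `(p.1, p.2]`; the supports of standard basis
elements are such intervals. -/
def Iv (p : Ordinal × Ordinal) : Set Ordinal := Set.Ioc p.1 p.2

/-- Left endpoints of the pieces used at a limit stage: the pieces are
`(ω^{γ_{k-1}}, ω^{γ_k}]` with the convention `ω^{γ_0} = 0`. -/
def loPiece (g : ℕ → Ordinal) : ℕ → Ordinal
  | 0 => 0
  | (k + 1) => Ordinal.omega0 ^ g k

/-- `IsStdSupp α s` says that `s` enumerates the supports (half-open ordinal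
intervals `(a,b]`, recorded as pairs `(a,b)`) of a standard basis of `C₀(ω^α)`:
* for `α = 1` the supports are the singletons `{n} = (n-1, n]`, `1 ≤ n < ω`, in any order;
* for `α = γ + 1`, split `(0, ω^{γ+1}]` into the pieces `(ω^γ k, ω^γ (k+1)]`, `k ∈ ℕ`;
  on each piece put the translate of a standard basis of `C(ω^γ)` (the indicator of the
  whole piece followed by a translated standard basis of `C₀(ω^γ)`), and enumerate all
  these so that whenever one support is strictly contained in another, the one with the
  larger support comes first;
* for `α` a limit, fix `γ_k ↑ α`, split `(0, ω^α]` into the pieces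
  `(ω^{γ_{k-1}}, ω^{γ_k}]`, place translated standard bases of `C(ω^{γ_k})` on them,
  and enumerate by the same rule. -/
inductive IsStdSupp : Ordinal → (ℕ → Ordinal × Ordinal) → Prop
  | base (e : ℕ ≃ ℕ) : IsStdSupp 1 (fun n => ((e n : Ordinal), (e n : Ordinal) + 1))
  | succ (γ : Ordinal) (hγ : 1 ≤ γ) (t : ℕ → ℕ → Ordinal × Ordinal)
      (ht : ∀ k, IsStdSupp γ (t k))
      (s : ℕ → Ordinal × Ordinal) (hinj : Function.Injective s)
      (hrange : Set.range s = ⋃ k : ℕ,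
        ({(Ordinal.omega0 ^ γ * (k : Ordinal), Ordinal.omega0 ^ γ * ((k : Ordinal) + 1))} ∪
          {p | ∃ n, p = (Ordinal.omega0 ^ γ * (k : Ordinal) + (t k n).1,
                          Ordinal.omega0 ^ γ * (k : Ordinal) + (t k n).2)}))
      (horder : ∀ m n, Iv (s m) ⊂ Iv (s n) → n < m) :
      IsStdSupp (γ + 1) s
  | limit (α : Ordinal) (hα : Order.IsSuccLimit α) (g : ℕ → Ordinal) (hg : StrictMono g)
      (hglt : ∀ k, g k < α) (hcof : ∀ β < α, ∃ k, β ≤ g k)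
      (t : ℕ → ℕ → Ordinal × Ordinal) (ht : ∀ k, IsStdSupp (g k) (t k))
      (s : ℕ → Ordinal × Ordinal) (hinj : Function.Injective s)
      (hrange : Set.range s = ⋃ k : ℕ,
        ({(loPiece g k, Ordinal.omega0 ^ g k)} ∪
          {p | ∃ n, p = (loPiece g k + (t k n).1, loPiece g k + (t k n).2)}))
      (horder : ∀ m n, Iv (s m) ⊂ Iv (s n) → n < m) :
      IsStdSupp α s

lemma one_le_omega0_opow (α : Ordinal) : (1 : Ordinal) ≤ Ordinal.omega0 ^ α :=
  Order.one_le_iff_pos.mpr (Ordinal.opow_pos α Ordinal.omega0_pos)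

/-- The compact ordinal interval `[1, β]` with its order topology. -/
abbrev IccO (β : Ordinal) := ↥(Set.Icc (1 : Ordinal) β)

/-- The top point `ω^α` of the interval `[1, ω^α]`. -/
def topPt (α : Ordinal) : IccO (Ordinal.omega0 ^ α) :=
  ⟨Ordinal.omega0 ^ α, ⟨one_le_omega0_opow α, le_rfl⟩⟩

/-- `C₀(ω^α)`: the closed hyperplane of `C(ω^α) = C([1, ω^α], ℝ)` consisting of the
functions vanishing at `ω^α`. -/
def C0Sub (α : Ordinal) : Submodule ℝ C(IccO (Ordinal.omega0 ^ α), ℝ) where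
  carrier := {f | f (topPt α) = 0}
  zero_mem' := rfl
  add_mem' := by
    intro a b ha hb
    simp only [Set.mem_setOf_eq, ContinuousMap.add_apply] at *
    rw [ha, hb, add_zero]
  smul_mem' := by
    intro c f hf
    simp only [Set.mem_setOf_eq, ContinuousMap.smul_apply] at *
    rw [hf, smul_zero]

/-- The Banach space `C₀(ω^α)`. -/
abbrev C0Space (α : Ordinal) := ↥(C0Sub α)

set_option synthInstance.maxHeartbeats 1000000 in
instance instC0SpaceNormedAddCommGroup (α : Ordinal) : NormedAddCommGroup (C0Space α) :=
  inferInstance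

set_option synthInstance.maxHeartbeats 1000000 in
instance instC0SpaceNormedSpace (α : Ordinal) : NormedSpace ℝ (C0Space α) :=
  inferInstance

/-- `x` is a standard basis of `C₀(ω^α)`: the `x n` are the indicator functions of a
standard sequence of supports. -/
def IsStdBasisC0 (α : Ordinal) (x : ℕ → C0Space α) : Prop :=
  ∃ s : ℕ → Ordinal × Ordinal, IsStdSupp α s ∧
    ∀ (n : ℕ) (ρ : IccO (Ordinal.omega0 ^ α)),
      (x n : C(IccO (Ordinal.omega0 ^ α), ℝ)) ρ =
        Set.indicator (Iv (s n)) (fun _ => (1 : ℝ)) (ρ : Ordinal)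

/-- Two sequences `u`, `v` are `C`-equivalent: there is a scaling constant `c > 0`
with `c ‖∑ a i • u i‖ ≤ ‖∑ a i • v i‖ ≤ C c ‖∑ a i • u i‖` for all finitely supported
coefficients; equivalently the map `u i ↦ v i` extends to an isomorphism `S` of the
closed linear spans with `‖S‖ ‖S⁻¹‖ ≤ C`. -/
def SeqCEquiv {E F : Type*} [NormedAddCommGroup E] [NormedSpace ℝ E]
    [NormedAddCommGroup F] [NormedSpace ℝ F] (C : ℝ) (u : ℕ → E) (v : ℕ → F) : Prop :=
  ∃ c : ℝ, 0 < c ∧ ∀ (s : Finset ℕ) (a : ℕ → ℝ),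
    c * ‖∑ i ∈ s, a i • u i‖ ≤ ‖∑ i ∈ s, a i • v i‖ ∧
    ‖∑ i ∈ s, a i • v i‖ ≤ C * c * ‖∑ i ∈ s, a i • u i‖

/-- `(y n)` is a Schauder basis of `E`: every vector has a unique representation as a
norm convergent series `∑ a n • y n`. -/
def IsSchauderBasis {E : Type*} [NormedAddCommGroup E] [NormedSpace ℝ E]
    (y : ℕ → E) : Prop :=
  ∀ v : E, ∃! a : ℕ → ℝ,
    Filter.Tendsto (fun N => ∑ j ∈ Finset.range N, a j • y j) Filter.atTop (nhds v)


/-- `C`-equivalence of the families `(u i)_{i ∈ M}` and `(v i)_{i ∈ M}`. -/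
def SeqCEquivOn {E F : Type*} [NormedAddCommGroup E] [NormedSpace ℝ E]
    [NormedAddCommGroup F] [NormedSpace ℝ F]
    (C : ℝ) (M : Set ℕ) (u : ℕ → E) (v : ℕ → F) : Prop :=
  ∃ c : ℝ, 0 < c ∧ ∀ (s : Finset ℕ), ↑s ⊆ M → ∀ a : ℕ → ℝ,
    c * ‖∑ i ∈ s, a i • u i‖ ≤ ‖∑ i ∈ s, a i • v i‖ ∧
    ‖∑ i ∈ s, a i • v i‖ ≤ C * c * ‖∑ i ∈ s, a i • u i‖

/-!
Only three properties of standard supports matter: they are nonempty intervals `(a, b]` with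
`b < ω^α`, and an interval containing the top `b` of another one contains all of it; these survive
the inductive construction piece by piece. The inclusion order is then metric:
`I ⊆ J ↔ ‖2 • 1_I - 1_J‖ ≤ 1`, the value `2` being attained at the top of `I` otherwise. All
basis vectors have norm one, so a `1`-equivalence is an isometry and preserves this order.
Conversely, the value of `∑ aᵢ 1_{Iᵢ}` at a point `ρ` is the sum of the `aⱼ` with `Iᵢ ⊆ Iⱼ`, where
`Iᵢ` is the smallest support containing `ρ`; if `Iᵢ ↦ Jᵢ` preserves inclusion both ways this is
the value of `∑ aᵢ 1_{Jᵢ}` at the top of `Jᵢ`, so the two sup norms agree.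
-/

open Ordinal

structure IsTopNested (B : Ordinal) (s : ℕ → Ordinal × Ordinal) : Prop where
  fst_lt_snd : ∀ n, (s n).1 < (s n).2
  snd_lt : ∀ n, (s n).2 < B
  subset_of_snd_mem : ∀ m n, (s m).2 ∈ Iv (s n) → Iv (s m) ⊆ Iv (s n)

namespace IsTopNested

variable {B : Ordinal} {s : ℕ → Ordinal × Ordinal}

lemma snd_mem (h : IsTopNested B s) (n : ℕ) : (s n).2 ∈ Iv (s n) :=
  ⟨h.fst_lt_snd n, le_rfl⟩

lemma snd_mem_iff (h : IsTopNested B s) (m n : ℕ) :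
    (s m).2 ∈ Iv (s n) ↔ Iv (s m) ⊆ Iv (s n) :=
  ⟨h.subset_of_snd_mem m n, fun hmn => hmn (h.snd_mem m)⟩

lemma comp (h : IsTopNested B s) (φ : ℕ → ℕ) : IsTopNested B (s ∘ φ) :=
  ⟨fun n => h.fst_lt_snd (φ n), fun n => h.snd_lt (φ n),
    fun m n => h.subset_of_snd_mem (φ m) (φ n)⟩

lemma subset_of_mem_of_snd_le (h : IsTopNested B s) {ρ : Ordinal} {m n : ℕ}
    (hm : ρ ∈ Iv (s m)) (hn : ρ ∈ Iv (s n)) (hmn : (s m).2 ≤ (s n).2) :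
    Iv (s m) ⊆ Iv (s n) :=
  h.subset_of_snd_mem m n ⟨hn.1.trans_le hm.2, hmn⟩

lemma snd_mem_Icc (h : IsTopNested B s) (n : ℕ) : (s n).2 ∈ Set.Icc 1 B :=
  ⟨Order.one_le_iff_pos.2 (zero_le.trans_lt (h.fst_lt_snd n)), (h.snd_lt n).le⟩

end IsTopNested

lemma isTopNested_base (e : ℕ ≃ ℕ) :
    IsTopNested (ω ^ (1 : Ordinal))
      (fun n => ((e n : Ordinal), (e n : Ordinal) + 1)) where
  fst_lt_snd n := Order.lt_add_one_iff.2 le_rfl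
  snd_lt n := by
    rw [Ordinal.opow_one]
    exact_mod_cast Ordinal.natCast_lt_omega0 (e n + 1)
  subset_of_snd_mem m n := by
    rintro ⟨hlt, hle⟩
    have hmn : e m = e n := by
      simp only at hlt hle
      norm_cast at hlt hle
      omega
    simp only [hmn, subset_rfl]

def pieceSupps (c : ℕ → Ordinal) (t : ℕ → ℕ → Ordinal × Ordinal) (k : ℕ) :
    Set (Ordinal × Ordinal) :=
  {(c k, c (k + 1))} ∪ {p | ∃ n, p = (c k + (t k n).1, c k + (t k n).2)}

section Pieces

variable {c b : ℕ → Ordinal} {t : ℕ → ℕ → Ordinal × Ordinal}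

lemma fst_lt_snd_and_Iv_subset_of_mem_pieceSupps (hc : StrictMono c)
    (hcb : ∀ k, c k + b k ≤ c (k + 1)) (ht : ∀ k, IsTopNested (b k) (t k)) {k : ℕ}
    {p : Ordinal × Ordinal} (hp : p ∈ pieceSupps c t k) :
    p.1 < p.2 ∧ Iv p ⊆ Set.Ioc (c k) (c (k + 1)) := by
  rcases hp with rfl | ⟨n, rfl⟩
  · exact ⟨hc k.lt_succ_self, subset_rfl⟩
  · refine ⟨(add_lt_add_iff_left _).2 ((ht k).fst_lt_snd n), Set.Ioc_subset_Ioc le_self_add ?_⟩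
    exact ((add_lt_add_iff_left _).2 ((ht k).snd_lt n)).le.trans (hcb k)

lemma subset_of_snd_mem_of_mem_pieceSupps (hc : StrictMono c)
    (hcb : ∀ k, c k + b k ≤ c (k + 1)) (ht : ∀ k, IsTopNested (b k) (t k)) {k : ℕ}
    {p q : Ordinal × Ordinal} (hp : p ∈ pieceSupps c t k) (hq : q ∈ pieceSupps c t k)
    (hpq : p.2 ∈ Iv q) : Iv p ⊆ Iv q := by
  rcases hq with rfl | ⟨n, rfl⟩
  · exact (fst_lt_snd_and_Iv_subset_of_mem_pieceSupps hc hcb ht hp).2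
  rcases hp with rfl | ⟨m, rfl⟩
  · exact absurd hpq.2
      (not_le.2 (((add_lt_add_iff_left _).2 ((ht k).snd_lt n)).trans_le (hcb k)))
  · have hmn : (t k m).2 ∈ Iv (t k n) :=
      ⟨(add_lt_add_iff_left _).1 hpq.1, (add_le_add_iff_left _).1 hpq.2⟩
    obtain ⟨hsnd, hfst⟩ := (Set.Ioc_subset_Ioc_iff ((ht k).fst_lt_snd m)).1
      ((ht k).subset_of_snd_mem m n hmn)
    exact Set.Ioc_subset_Ioc ((add_le_add_iff_left _).2 hfst) ((add_le_add_iff_left _).2 hsnd)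

lemma IsTopNested.of_range_subset_pieceSupps {B : Ordinal} {s : ℕ → Ordinal × Ordinal}
    (hc : StrictMono c) (hcb : ∀ k, c k + b k ≤ c (k + 1)) (hcB : ∀ k, c (k + 1) < B)
    (ht : ∀ k, IsTopNested (b k) (t k)) (hs : Set.range s ⊆ ⋃ k, pieceSupps c t k) :
    IsTopNested B s := by
  have hpiece n : ∃ k, s n ∈ pieceSupps c t k ∧ (s n).1 < (s n).2 ∧
      Iv (s n) ⊆ Set.Ioc (c k) (c (k + 1)) := by
    obtain ⟨k, hk⟩ := Set.mem_iUnion.1 (hs (Set.mem_range_self n))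
    exact ⟨k, hk, fst_lt_snd_and_Iv_subset_of_mem_pieceSupps hc hcb ht hk⟩
  refine ⟨fun n => (hpiece n).choose_spec.2.1, fun n => ?_, fun m n hmn => ?_⟩
  · obtain ⟨k, -, hlt, hsub⟩ := hpiece n
    exact (hsub ⟨hlt, le_rfl⟩).2.trans_lt (hcB k)
  · obtain ⟨k, hm, hmlt, hmsub⟩ := hpiece m
    obtain ⟨l, hn, -, hnsub⟩ := hpiece n
    obtain rfl : k = l := by
      by_contra hkl
      exact Set.disjoint_left.1 (hc.monotone.pairwise_disjoint_on_Ioc_succ hkl)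
        (hmsub ⟨hmlt, le_rfl⟩) (hnsub hmn)
    exact subset_of_snd_mem_of_mem_pieceSupps hc hcb ht hm hn hmn

end Pieces

theorem IsStdSupp.isTopNested {α : Ordinal} {s : ℕ → Ordinal × Ordinal} (h : IsStdSupp α s) :
    IsTopNested (ω ^ α) s := by
  induction h with
  | base e => exact isTopNested_base e
  | succ γ _ t _ s _ hrange _ ih =>
    have hpos : 0 < ω ^ γ := opow_pos γ omega0_pos
    refine .of_range_subset_pieceSupps (c := fun k : ℕ => ω ^ γ * k) (b := fun _ => ω ^ γ)
      (fun k l hkl => (mul_lt_mul_iff_right₀ hpos).2 (by exact_mod_cast hkl))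
      (fun k => by push_cast; rw [mul_add_one]) (fun k => ?_) ih ?_
    · rw [opow_add, opow_one, mul_lt_mul_iff_right₀ hpos]
      exact natCast_lt_omega0 (k + 1)
    · rw [hrange]
      simp only [pieceSupps]
      push_cast
      exact subset_rfl
  | limit α _ g hg hglt _ t _ s _ hrange _ ih =>
    have hlo k : loPiece g k < ω ^ g k := by
      cases k with
      | zero => exact opow_pos _ omega0_pos
      | succ k => exact (opow_lt_opow_iff_right one_lt_omega0).2 (hg k.lt_succ_self)
    exact .of_range_subset_pieceSupps (b := fun k => ω ^ g k)
      (strictMono_nat_of_lt_succ hlo) (fun k => (add_omega0_opow (hlo k)).le)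
      (fun k => (opow_lt_opow_iff_right one_lt_omega0).2 (hglt k)) ih hrange.le

section SeqCEquivOn

variable {E F : Type*} [NormedAddCommGroup E] [NormedSpace ℝ E]
  [NormedAddCommGroup F] [NormedSpace ℝ F] {M : Set ℕ} {u : ℕ → E} {v : ℕ → F}

lemma seqCEquivOn_one_iff (huv : ∀ i ∈ M, ‖u i‖ = ‖v i‖) (hu : ∀ i ∈ M, u i ≠ 0) :
    SeqCEquivOn 1 M u v ↔
      ∀ T : Finset ℕ, ↑T ⊆ M → ∀ a : ℕ → ℝ, ‖∑ i ∈ T, a i • u i‖ = ‖∑ i ∈ T, a i • v i‖ := by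
  constructor
  · rintro ⟨c, -, hc⟩ T hT a
    rcases T.eq_empty_or_nonempty with rfl | ⟨i, hi⟩
    · simp
    have hiM : i ∈ M := hT hi
    have hc1 : c = 1 := by
      obtain ⟨hlow, hup⟩ := hc {i} (by simpa using hiM) 1
      simp only [Finset.sum_singleton, Pi.one_apply, one_smul, ← huv i hiM] at hlow hup
      have hpos : 0 < ‖u i‖ := norm_pos_iff.2 (hu i hiM)
      exact le_antisymm (by nlinarith) (by nlinarith)
    subst hc1
    obtain ⟨hlow, hup⟩ := hc T hT a
    linarith
  · intro h
    exact ⟨1, one_pos, fun T hT a => by simp [h T hT a]⟩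

lemma norm_smul_add_smul_eq_of_forall_norm_sum_eq
    (h : ∀ T : Finset ℕ, ↑T ⊆ M → ∀ a : ℕ → ℝ, ‖∑ i ∈ T, a i • u i‖ = ‖∑ i ∈ T, a i • v i‖)
    {i j : ℕ} (hi : i ∈ M) (hj : j ∈ M) (hij : i ≠ j) (p q : ℝ) :
    ‖p • u i + q • u j‖ = ‖p • v i + q • v j‖ := by
  simpa [Finset.sum_pair hij, hij.symm] using
    h {i, j} (by simp [Set.insert_subset_iff, hi, hj]) fun n => if n = i then p else q

end SeqCEquivOn

section Indicators

open scoped Classical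

variable {α : Ordinal} {s t : ℕ → Ordinal × Ordinal} {x y : ℕ → C0Space α}
  (hx : ∀ n (ρ : IccO (ω ^ α)),
    (x n : C(IccO (ω ^ α), ℝ)) ρ = Set.indicator (Iv (s n)) (fun _ => (1 : ℝ)) ρ)
include hx

lemma coe_sum_smul_apply (T : Finset ℕ) (a : ℕ → ℝ) (ρ : IccO (ω ^ α)) :
    ((∑ i ∈ T, a i • x i : C0Space α) : C(IccO (ω ^ α), ℝ)) ρ =
      ∑ i ∈ T, if (ρ : Ordinal) ∈ Iv (s i) then a i else 0 := by
  simp [hx, Set.indicator_apply]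

lemma norm_eq_one (hs : IsTopNested (ω ^ α) s) (n : ℕ) : ‖x n‖ = 1 := by
  rw [Submodule.coe_norm]
  refine le_antisymm ((ContinuousMap.norm_le _ zero_le_one).2 fun ρ => ?_) ?_
  · rw [hx]
    simpa using norm_indicator_le_norm_self (fun _ => (1 : ℝ)) (ρ : Ordinal)
  · have h := ContinuousMap.norm_coe_le_norm (x n : C(IccO (ω ^ α), ℝ))
      ⟨(s n).2, hs.snd_mem_Icc n⟩
    rwa [hx, Set.indicator_of_mem (hs.snd_mem n), norm_one] at h

lemma subset_iff_norm_two_smul_sub_le_one (hs : IsTopNested (ω ^ α) s) (m n : ℕ) :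
    Iv (s m) ⊆ Iv (s n) ↔ ‖(2 : ℝ) • x m - x n‖ ≤ 1 := by
  have hval (ρ : IccO (ω ^ α)) : (((2 : ℝ) • x m - x n : C0Space α) : C(IccO (ω ^ α), ℝ)) ρ =
      2 * Set.indicator (Iv (s m)) (fun _ => (1 : ℝ)) ρ -
        Set.indicator (Iv (s n)) (fun _ => (1 : ℝ)) ρ := by
    simp [← hx]
  rw [Submodule.coe_norm]
  constructor
  · intro hmn
    refine (ContinuousMap.norm_le _ zero_le_one).2 fun ρ => ?_
    rw [hval]
    by_cases hρm : (ρ : Ordinal) ∈ Iv (s m)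
    · norm_num [hρm, hmn hρm]
    · by_cases hρn : (ρ : Ordinal) ∈ Iv (s n) <;> simp [hρm, hρn]
  · intro hnorm
    by_contra hmn
    have h := ContinuousMap.norm_coe_le_norm _ ⟨(s m).2, hs.snd_mem_Icc m⟩ |>.trans hnorm
    rw [hval, Set.indicator_of_mem (hs.snd_mem m),
      Set.indicator_of_notMem (mt (hs.subset_of_snd_mem m n) hmn)] at h
    norm_num at h

lemma norm_sum_smul_le {B : Ordinal} (hs : IsTopNested B s)
    (hy : ∀ n (ρ : IccO (ω ^ α)),
      (y n : C(IccO (ω ^ α), ℝ)) ρ = Set.indicator (Iv (t n)) (fun _ => (1 : ℝ)) ρ)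
    (ht : IsTopNested (ω ^ α) t) (T : Finset ℕ) (a : ℕ → ℝ)
    (hst : ∀ i ∈ T, ∀ j ∈ T, Iv (s i) ⊆ Iv (s j) ↔ Iv (t i) ⊆ Iv (t j)) :
    ‖∑ i ∈ T, a i • x i‖ ≤ ‖∑ i ∈ T, a i • y i‖ := by
  rw [Submodule.coe_norm]
  refine (ContinuousMap.norm_le _ (norm_nonneg _)).2 fun ρ => ?_
  by_cases hρ : ∃ i ∈ T, (ρ : Ordinal) ∈ Iv (s i)
  · obtain ⟨i, hi, hmin⟩ := (T.filter fun i => (ρ : Ordinal) ∈ Iv (s i)).exists_min_image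
      (fun i => (s i).2) (by simpa [Finset.filter_nonempty_iff] using hρ)
    rw [Finset.mem_filter] at hi
    obtain ⟨hiT, hρi⟩ := hi
    have hvalue : ((∑ i ∈ T, a i • x i : C0Space α) : C(IccO (ω ^ α), ℝ)) ρ =
        ((∑ i ∈ T, a i • y i : C0Space α) : C(IccO (ω ^ α), ℝ))
          ⟨(t i).2, ht.snd_mem_Icc i⟩ := by
      rw [coe_sum_smul_apply hx, coe_sum_smul_apply hy]
      refine Finset.sum_congr rfl fun j hj => if_congr ?_ rfl rfl
      calc (ρ : Ordinal) ∈ Iv (s j)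
          ↔ Iv (s i) ⊆ Iv (s j) := ⟨fun hρj => hs.subset_of_mem_of_snd_le hρi hρj
              (hmin j (Finset.mem_filter.2 ⟨hj, hρj⟩)), fun hij => hij hρi⟩
        _ ↔ Iv (t i) ⊆ Iv (t j) := hst i hiT j hj
        _ ↔ (t i).2 ∈ Iv (t j) := (ht.snd_mem_iff i j).symm
    rw [hvalue]
    exact ContinuousMap.norm_coe_le_norm _ _
  · push Not at hρ
    rw [coe_sum_smul_apply hx, Finset.sum_eq_zero fun i hi => if_neg (hρ i hi), norm_zero]
    exact norm_nonneg _

end Indicators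

theorem stdBasis_subsequences_one_equivalent_iff_general
    (α : Ordinal) (s : ℕ → Ordinal × Ordinal) (hs : IsStdSupp α s)
    (x : ℕ → C0Space α)
    (hx : ∀ (n : ℕ) (ρ : IccO (Ordinal.omega0 ^ α)),
      (x n : C(IccO (Ordinal.omega0 ^ α), ℝ)) ρ =
        Set.indicator (Iv (s n)) (fun _ => (1 : ℝ)) (ρ : Ordinal))
    (M : Set ℕ) (φ : ℕ → ℕ) :
    SeqCEquivOn 1 M x (fun i => x (φ i)) ↔
      ∀ i ∈ M, ∀ j ∈ M, (Iv (s i) ⊆ Iv (s j) ↔ Iv (s (φ i)) ⊆ Iv (s (φ j))) := by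
  have hnested := hs.isTopNested
  have hnorm (n : ℕ) : ‖x n‖ = 1 := norm_eq_one hx hnested n
  rw [seqCEquivOn_one_iff (fun i _ => by rw [hnorm, hnorm])
    (fun i _ => ne_zero_of_norm_ne_zero (by simp [hnorm]))]
  constructor
  · intro hiso i hi j hj
    rcases eq_or_ne i j with rfl | hij
    · exact iff_of_true subset_rfl subset_rfl
    have hpair := norm_smul_add_smul_eq_of_forall_norm_sum_eq hiso hi hj hij 2 (-1)
    simp only [neg_one_smul, ← sub_eq_add_neg] at hpair
    rw [subset_iff_norm_two_smul_sub_le_one hx hnested, hpair,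
      ← subset_iff_norm_two_smul_sub_le_one hx hnested]
  · intro horder T hT a
    have horderT : ∀ i ∈ T, ∀ j ∈ T, Iv (s i) ⊆ Iv (s j) ↔ Iv (s (φ i)) ⊆ Iv (s (φ j)) :=
      fun i hi j hj => horder i (hT hi) j (hT hj)
    exact le_antisymm
      (norm_sum_smul_le hx hnested (fun n => hx (φ n)) (hnested.comp φ) T a horderT)
      (norm_sum_smul_le (fun n => hx (φ n)) (hnested.comp φ) hx hnested T a
        fun i hi j hj => (horderT i hi j hj).symm)

/-- Two subsequences `(x i)_{i ∈ M}` and `(x (φ i))_{i ∈ M}` of a standard basis of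
`C₀(ω^α)` are `1`-equivalent iff `φ` induces an order isomorphism between the
corresponding families of supports, partially ordered by inclusion. -/
theorem stdBasis_subsequences_one_equivalent_iff
    (α : Ordinal) (s : ℕ → Ordinal × Ordinal) (hs : IsStdSupp α s)
    (x : ℕ → C0Space α)
    (hx : ∀ (n : ℕ) (ρ : IccO (Ordinal.omega0 ^ α)),
      (x n : C(IccO (Ordinal.omega0 ^ α), ℝ)) ρ =
        Set.indicator (Iv (s n)) (fun _ => (1 : ℝ)) (ρ : Ordinal))
    (M : Set ℕ) (φ : ℕ → ℕ) (hφ : Set.InjOn φ M) :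
    SeqCEquivOn 1 M x (fun i => x (φ i)) ↔
      ∀ i ∈ M, ∀ j ∈ M, (Iv (s i) ⊆ Iv (s j) ↔ Iv (s (φ i)) ⊆ Iv (s (φ j))) :=
  stdBasis_subsequences_one_equivalent_iff_general α s hs x hx M φ

end
end
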